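/- The van Emden–Kowalski operator is a monoid morphism with respect to sequential composition and union: for all propositional Horn theories P and R over A and every I ⊆ A, T_{P∘R}(I) = T_P(T_R(I)) and T_{P∪R}(I) = T_P(I) ∪ T_R(I); moreover, for every J ⊆ A, T_{⟨J⟩}(I) = J. -/
import Mathlib


/-- A propositional Horn theory over atoms `A`: a finite set of rules `(head, body)`. -/
abbrev Theory (A : Type*) := Finset (A × Finset A)

variable {A : Type*} [Fintype A] [DecidableEq A]

/-- Heads of a (sub)theory. -/
def heads (S : Theory A) : Finset A := S.image Prod.fst

/-- Body atoms of a (sub)theory. -/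
def bodies (S : Theory A) : Finset A := S.biUnion Prod.snd

/-- Sequential composition of propositional Horn theories. -/
def comp (P R : Theory A) : Theory A :=
  P.biUnion fun r =>
    (R.powerset.filter fun S => S.card = r.2.card ∧ heads S = r.2).image
      fun S => (r.1, bodies S)

/-- The unit theory `1_A = {a ← a | a ∈ A}`. -/
def unitTheory (A : Type*) [Fintype A] [DecidableEq A] : Theory A :=
  Finset.univ.image fun a => (a, ({a} : Finset A))

/-- The theory associated with an interpretation `I ⊆ A`. -/
def interp (I : Finset A) : Theory A := I.image fun a => (a, (∅ : Finset A))

/-- The van Emden–Kowalski operator. -/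
def vek (P : Theory A) (I : Finset A) : Finset A :=
  (P.filter fun r => r.2 ⊆ I).image Prod.fst

/-- The facts (rules with empty body) of a theory. -/
def facts (P : Theory A) : Theory A := P.filter fun r => r.2 = ∅

/-- The proper rules (rules with nonempty body) of a theory. -/
def proper (P : Theory A) : Theory A := P.filter fun r => r.2 ≠ ∅

/-- The left reduct `^I P`. -/
def leftReduct (I : Finset A) (P : Theory A) : Theory A := P.filter fun r => r.1 ∈ I

/-- The right reduct `P^I`. -/
def rightReduct (P : Theory A) (I : Finset A) : Theory A := P.filter fun r => r.2 ⊆ I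

/-- The restricted unit theory `1^I = {a ← a | a ∈ I}`. -/
def unitOn (I : Finset A) : Theory A := I.image fun a => (a, ({a} : Finset A))

/-- The closure `cl_B(P) = {b ← b | b ∈ B} ∪ P`. -/
def cl (B : Finset A) (P : Theory A) : Theory A :=
  (B.image fun b => (b, ({b} : Finset A))) ∪ P

lemma mem_vek {P : Theory A} {I : Finset A} {a : A} :
    a ∈ vek P I ↔ ∃ r, r ∈ P ∧ r.2 ⊆ I ∧ r.1 = a := by
  simp [vek, and_assoc]

lemma mem_comp {P R : Theory A} {x : A × Finset A} :
    x ∈ comp P R ↔ ∃ r, r ∈ P ∧ ∃ S, S ⊆ R ∧ S.card = r.2.card ∧ heads S = r.2 ∧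
      x = (r.1, bodies S) := by
  simp only [comp, Finset.mem_biUnion, Finset.mem_image, Finset.mem_filter,
    Finset.mem_powerset]
  constructor
  · rintro ⟨r, hr, S, ⟨hSR, h1, h2⟩, rfl⟩
    exact ⟨r, hr, S, hSR, h1, h2, rfl⟩
  · rintro ⟨r, hr, S, hSR, h1, h2, rfl⟩
    exact ⟨r, hr, S, ⟨hSR, h1, h2⟩, rfl⟩

/-- The van Emden–Kowalski operator is a monoid morphism with respect to
sequential composition and union, and sends interpretations to constants. -/
theorem vek_morphism (P R : Theory A) (I : Finset A) :
    vek (comp P R) I = vek P (vek R I) ∧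
    vek (P ∪ R) I = vek P I ∪ vek R I ∧
    ∀ J : Finset A, vek (interp J) I = J := by
  refine ⟨?_, ?_, ?_⟩
  · ext a
    rw [mem_vek, mem_vek]
    constructor
    · rintro ⟨x, hx, hxI, rfl⟩
      rw [mem_comp] at hx
      obtain ⟨r, hrP, S, hSR, hcard, hheads, rfl⟩ := hx
      refine ⟨r, hrP, ?_, rfl⟩
      intro b hb
      rw [← hheads] at hb
      simp only [heads, Finset.mem_image] at hb
      obtain ⟨s, hsS, rfl⟩ := hb
      refine mem_vek.mpr ⟨s, hSR hsS, ?_, rfl⟩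
      intro c hc
      exact hxI (Finset.mem_biUnion.mpr ⟨s, hsS, hc⟩)
    · rintro ⟨r, hrP, hbody, rfl⟩
      have h : ∀ b ∈ r.2, ∃ s, s ∈ R ∧ s.2 ⊆ I ∧ s.1 = b := fun b hb =>
        mem_vek.mp (hbody hb)
      choose f hfR hfI hf1 using h
      set S : Theory A := r.2.attach.image (fun b => f b.1 b.2) with hSdef
      have hSR : S ⊆ R := by
        intro s hs
        simp only [hSdef, Finset.mem_image, Finset.mem_attach, true_and] at hs
        obtain ⟨b, rfl⟩ := hs
        exact hfR b.1 b.2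
      have hheads : heads S = r.2 := by
        ext c
        simp only [heads, hSdef, Finset.mem_image, Finset.mem_attach, true_and]
        constructor
        · rintro ⟨s, ⟨b, rfl⟩, rfl⟩
          rw [hf1]; exact b.2
        · intro hc
          exact ⟨f c hc, ⟨⟨c, hc⟩, rfl⟩, hf1 c hc⟩
      have hcard : S.card = r.2.card := by
        rw [hSdef, Finset.card_image_of_injOn, Finset.card_attach]
        intro b _ c _ hbc
        have hbc' : f b.1 b.2 = f c.1 c.2 := hbc
        have : (f b.1 b.2).1 = (f c.1 c.2).1 := by rw [hbc']
        rw [hf1, hf1] at this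
        exact Subtype.ext this
      refine ⟨(r.1, bodies S), ?_, ?_, rfl⟩
      · exact mem_comp.mpr ⟨r, hrP, S, hSR, hcard, hheads, rfl⟩
      · intro c hc
        simp only [bodies, Finset.mem_biUnion, hSdef, Finset.mem_image,
          Finset.mem_attach, true_and] at hc
        obtain ⟨s, ⟨b, rfl⟩, hcs⟩ := hc
        exact hfI b.1 b.2 hcs
  · ext a
    simp only [Finset.mem_union, mem_vek]
    constructor
    · rintro ⟨r, hr | hr, hrI, rfl⟩
      · exact Or.inl ⟨r, hr, hrI, rfl⟩
      · exact Or.inr ⟨r, hr, hrI, rfl⟩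
    · rintro (⟨r, hr, hrI, rfl⟩ | ⟨r, hr, hrI, rfl⟩)
      · exact ⟨r, Or.inl hr, hrI, rfl⟩
      · exact ⟨r, Or.inr hr, hrI, rfl⟩
  · intro J
    ext a
    rw [mem_vek]
    constructor
    · rintro ⟨r, hr, _, rfl⟩
      simp only [interp, Finset.mem_image] at hr
      obtain ⟨b, hb, hbe⟩ := hr
      rw [← hbe]
      exact hb
    · intro ha
      exact ⟨(a, ∅), Finset.mem_image.mpr ⟨a, ha, rfl⟩, Finset.empty_subset I, rfl⟩
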